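/- Let Ω ⊂ E be nonempty, closed, and (ε,δ)-subregular at x̂ with respect to S ⊆ Ω ∩ B_δ(x̂), and U = {x : P_Ω x ⊂ B_δ(x̂)}. Then the reflector R_Ω = 2P_Ω − Id is (S, 4ε+4ε²)-nonexpansive on U: for all x ∈ U, x₊ ∈ R_Ω x, x̄ ∈ S, ‖x₊ − x̄‖ ≤ √(1+4ε+4ε²) ‖x − x̄‖. -/

import Mathlib

/-!
Let `y ∈ P_Ω x` and `x̄ ∈ S`. Expanding the square gives
`‖(2y - x) - x̄‖² = ‖x - x̄‖² + 4⟪x - y, x̄ - y⟫`, and `x - y` is a proximal normal at `y`, so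
subregularity bounds the inner product by `ε ‖x - y‖ ‖x̄ - y‖`. Since `y` is a nearest point,
`‖x - y‖ ≤ ‖x - x̄‖`, and the law of cosines together with the triangle inequality yields
`‖x̄ - y‖ ≤ ε ‖x - y‖ + ‖x - x̄‖`. Hence the inner product is at most `(ε + ε²) ‖x - x̄‖²`, and
`1 + 4ε + 4ε² = (1 + 2ε)²`.
-/

open RealInnerProductSpace Metric

noncomputable section

variable {E : Type*} [NormedAddCommGroup E] [InnerProductSpace ℝ E]

/-- The (possibly multivalued) metric projector onto a set. -/
def projSet (Ω : Set E) (x : E) : Set E :=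
  {y | y ∈ Ω ∧ ‖x - y‖ = Metric.infDist x Ω}

/-- The (possibly multivalued) reflector across a set. -/
def reflSet (Ω : Set E) (x : E) : Set E :=
  {w | ∃ y ∈ projSet Ω x, w = (2 : ℝ) • y - x}

/-- Pointwise composition of the two reflectors. -/
def rARB (A B : Set E) (x : E) : Set E :=
  ⋃ y ∈ reflSet B x, reflSet A y

/-- The (possibly multivalued) Douglas–Rachford operator. -/
def TDR (A B : Set E) (x : E) : Set E :=
  {w | ∃ z ∈ rARB A B x, w = ((1 : ℝ) / 2) • (z + x)}

/-- The proximal normal cone `cone (P_Ω⁻¹ x - x)`. -/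
def pnCone (Ω : Set E) (x : E) : Set E :=
  {v | ∃ t : ℝ, 0 ≤ t ∧ ∃ z : E, x ∈ projSet Ω z ∧ v = t • (z - x)}

theorem norm_two_smul_sub_sub_sq (x y z : E) :
    ‖(2 : ℝ) • y - x - z‖ ^ 2 = ‖x - z‖ ^ 2 + 4 * ⟪x - y, z - y⟫ := by
  have hsum : (2 : ℝ) • y - x - z = -((x - y) + (z - y)) := by rw [two_smul]; abel
  have hdiff : x - z = (x - y) - (z - y) := by abel
  rw [hsum, norm_neg, norm_add_sq_real, hdiff, norm_sub_sq_real (x - y)]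
  ring

theorem norm_le_mul_add_of_inner_le {u v : E} {ε : ℝ} (hε : 0 ≤ ε)
    (hinner : ⟪u, v⟫ ≤ ε * ‖u‖ * ‖v‖) : ‖v‖ ≤ ε * ‖u‖ + ‖u - v‖ := by
  rcases le_total 1 ε with hε1 | hε1
  · calc ‖v‖ ≤ ‖u‖ + ‖u - v‖ := norm_le_norm_add_norm_sub u v
      _ ≤ ε * ‖u‖ + ‖u - v‖ := by nlinarith [norm_nonneg u]
  · -- law of cosines: `(‖v‖ - ε‖u‖)² ≤ ‖u - v‖² - (1 - ε²)‖u‖²`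
    have hsq : (‖v‖ - ε * ‖u‖) ^ 2 ≤ ‖u - v‖ ^ 2 := by
      nlinarith [norm_sub_sq_real u v, mul_nonneg (mul_nonneg (sub_nonneg.2 hε1)
        (add_nonneg zero_le_one hε)) (sq_nonneg ‖u‖)]
    exact sub_le_iff_le_add'.mp (le_of_sq_le_sq hsq (norm_nonneg _))

theorem inner_le_mul_norm_sub_sq {u v : E} {ε : ℝ} (hε : 0 ≤ ε)
    (hinner : ⟪u, v⟫ ≤ ε * ‖u‖ * ‖v‖) (hu : ‖u‖ ≤ ‖u - v‖) :
    ⟪u, v⟫ ≤ (ε + ε ^ 2) * ‖u - v‖ ^ 2 := by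
  have hv := norm_le_mul_add_of_inner_le hε hinner
  calc ⟪u, v⟫ ≤ ε * ‖u‖ * (ε * ‖u‖ + ‖u - v‖) := hinner.trans (by gcongr)
    _ ≤ ε * ‖u - v‖ * (ε * ‖u - v‖ + ‖u - v‖) := by gcongr
    _ = (ε + ε ^ 2) * ‖u - v‖ ^ 2 := by ring

theorem norm_two_smul_sub_sub_le {x y z : E} {ε : ℝ} (hε : 0 ≤ ε)
    (hinner : ⟪x - y, z - y⟫ ≤ ε * ‖x - y‖ * ‖z - y‖) (hxy : ‖x - y‖ ≤ ‖x - z‖) :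
    ‖(2 : ℝ) • y - x - z‖ ≤ (1 + 2 * ε) * ‖x - z‖ := by
  have hxz : (x - y) - (z - y) = x - z := sub_sub_sub_cancel_right x z y
  have hbound := inner_le_mul_norm_sub_sq hε hinner (hxz ▸ hxy)
  rw [hxz] at hbound
  refine le_of_sq_le_sq ?_ (by positivity)
  rw [norm_two_smul_sub_sub_sq]
  nlinarith

theorem norm_sub_le_of_mem_projSet {G : Type*} [NormedAddCommGroup G] {Ω : Set G} {x y z : G}
    (hy : y ∈ projSet Ω x) (hz : z ∈ Ω) : ‖x - y‖ ≤ ‖x - z‖ := by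
  rw [hy.2, ← dist_eq_norm]
  exact Metric.infDist_le_dist_of_mem hz

theorem sub_mem_pnCone_of_mem_projSet {Ω : Set E} {x y : E} (hy : y ∈ projSet Ω x) :
    x - y ∈ pnCone Ω y :=
  ⟨1, zero_le_one, x, hy, (one_smul ℝ _).symm⟩

theorem refl_subregular_nonexpansive_general
    (Ω : Set E)
    (S : Set E) (xhat : E) (ε δ : ℝ) (hε : 0 ≤ ε)
    (hSsub : S ⊆ Ω ∩ Metric.closedBall xhat δ)
    (hsub : ∀ x ∈ Metric.closedBall xhat δ ∩ Ω, ∀ xbar ∈ S ∩ Metric.closedBall xhat δ,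
        ∀ v ∈ pnCone Ω x, ⟪v, xbar - x⟫ ≤ ε * ‖v‖ * ‖xbar - x‖) :
    ∀ x ∈ {x : E | projSet Ω x ⊆ Metric.closedBall xhat δ},
      ∀ xp ∈ reflSet Ω x, ∀ xbar ∈ S,
        ‖xp - xbar‖ ≤ Real.sqrt (1 + 4 * ε + 4 * ε ^ 2) * ‖x - xbar‖ := by
  rintro x hx _ ⟨y, hy, rfl⟩ xbar hxbar
  obtain ⟨hxbarΩ, hxbarB⟩ := hSsub hxbar
  have hinner : ⟪x - y, xbar - y⟫ ≤ ε * ‖x - y‖ * ‖xbar - y‖ :=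
    hsub y ⟨hx hy, hy.1⟩ xbar ⟨hxbar, hxbarB⟩ _ (sub_mem_pnCone_of_mem_projSet hy)
  have hsqrt : Real.sqrt (1 + 4 * ε + 4 * ε ^ 2) = 1 + 2 * ε := by
    rw [show 1 + 4 * ε + 4 * ε ^ 2 = (1 + 2 * ε) ^ 2 by ring]
    exact Real.sqrt_sq (by positivity)
  rw [hsqrt]
  exact norm_two_smul_sub_sub_le hε hinner (norm_sub_le_of_mem_projSet hy hxbarΩ)

/-- The reflector across an `(ε,δ)`-subregular set is `(S, 4ε+4ε²)`-nonexpansive on `U`. -/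
theorem refl_subregular_nonexpansive
    (Ω : Set E) (hΩ : Ω.Nonempty) (hΩc : IsClosed Ω)
    (S : Set E) (xhat : E) (ε δ : ℝ) (hε : 0 ≤ ε) (hδ : 0 < δ)
    (hSsub : S ⊆ Ω ∩ Metric.closedBall xhat δ)
    (hsub : ∀ x ∈ Metric.closedBall xhat δ ∩ Ω, ∀ xbar ∈ S ∩ Metric.closedBall xhat δ,
        ∀ v ∈ pnCone Ω x, ⟪v, xbar - x⟫ ≤ ε * ‖v‖ * ‖xbar - x‖) :
    ∀ x ∈ {x : E | projSet Ω x ⊆ Metric.closedBall xhat δ},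
      ∀ xp ∈ reflSet Ω x, ∀ xbar ∈ S,
        ‖xp - xbar‖ ≤ Real.sqrt (1 + 4 * ε + 4 * ε ^ 2) * ‖x - xbar‖ :=
  refl_subregular_nonexpansive_general Ω S xhat ε δ hε hSsub hsub
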